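/- arXiv:1503.06165 — 4 statements merged into one kernel-verified Lean document; each statement's English description precedes it below -/
import Mathlib

section
/- Let W be a neighborhood of 0 in ℂ, and let f₁ and f₂ be functions that are analytic at 0 and map W ∩ ℍ into ℍ, with f₁(0) = 0. Suppose one of f₁, f₂ has order of contact N with ℝ at 0 and the other maps some open real interval containing 0 into ℝ. Then f₂ ∘ f₁ has order of contact N with ℝ at 0. -/
open Complex Filter Set Topology Asymptotics Metric Polynomial

noncomputable section

/-- The open upper half-plane, as a subset of `ℂ`. -/
def UHP : Set ℂ := {z : ℂ | 0 < z.im}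

/-- `f` has order of contact `c` with `ℝ` at `0` (half-plane version). -/
def HalfPlaneContact (f : ℂ → ℂ) (c : ℝ) : Prop :=
  (f 0).im = 0 ∧
  ∃ m M δ : ℝ, 0 < m ∧ m ≤ M ∧ 0 < δ ∧
    ∀ x : ℝ, 0 < |x| → |x| < δ →
      m ≤ (f (x : ℂ)).im / ‖f 0 - f (x : ℂ)‖ ^ c ∧
      (f (x : ℂ)).im / ‖f 0 - f (x : ℂ)‖ ^ c ≤ M

/-- `φ` has order of contact `c` with `∂𝔻` at `ζ` (disk version). -/
def DiskContact (φ : ℂ → ℂ) (ζ : ℂ) (c : ℝ) : Prop :=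
  ‖φ ζ‖ = 1 ∧
  ∃ m M δ : ℝ, 0 < m ∧ m ≤ M ∧ 0 < δ ∧
    ∀ η : ℂ, ‖η‖ = 1 → η ≠ ζ → ‖η - ζ‖ < δ →
      m ≤ (1 - ‖φ η‖ ^ 2) / ‖φ ζ - φ η‖ ^ c ∧
      (1 - ‖φ η‖ ^ 2) / ‖φ ζ - φ η‖ ^ c ≤ M

/-- The Pick class `𝒫`: analytic on `ℍ` with nonnegative imaginary part there. -/
def InPick (f : ℂ → ℂ) : Prop :=
  DifferentiableOn ℂ f UHP ∧ ∀ z ∈ UHP, 0 ≤ (f z).im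

/-- The class `𝒫₀`: members of `𝒫` that extend analytically to a neighborhood of `0`. -/
def InPick0 (f : ℂ → ℂ) : Prop := InPick f ∧ AnalyticAt ℂ f 0

/-- The `k`-th Taylor coefficient of `f` at `0`. -/
def taylorCoeff (f : ℂ → ℂ) (k : ℕ) : ℂ := iteratedDeriv k f 0 / (Nat.factorial k : ℂ)

/-- The Hankel matrix `H_m(a₁, …, a_{2m−1})` with `(i,j)` entry `a_{i+j+1}` (0-based). -/
def hankel (a : ℕ → ℂ) (m : ℕ) : Matrix (Fin m) (Fin m) ℂ :=
  Matrix.of fun i j => a (i.1 + j.1 + 1)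

/-- The linear fractional transformation associated with a 2×2 matrix. -/
def lftApply (M : Matrix (Fin 2) (Fin 2) ℂ) (h : ℂ) : ℂ :=
  (M 0 0 * h + M 0 1) / (M 1 0 * h + M 1 1)

/-- The augmentation matrix `A(a₀, a₁)(z)`. -/
def augMatrix (a₀ a₁ : ℝ) (z : ℂ) : Matrix (Fin 2) (Fin 2) ℂ :=
  !![(a₀ : ℂ) * (a₁ : ℂ) * z, -(a₀ : ℂ) - (a₁ : ℂ) * z; (a₁ : ℂ) * z, -1]

/-- The product `A(s₀,t₀)(z) A(s₁,t₁)(z) ⋯ A(s_{m−1},t_{m−1})(z)`. -/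
def augProdN (m : ℕ) (s t : ℕ → ℝ) (z : ℂ) : Matrix (Fin 2) (Fin 2) ℂ :=
  (List.ofFn fun i : Fin m => augMatrix (s i.1) (t i.1) z).prod

/-- The conformal map `τ_α : 𝔻 → ℍ`, `τ_α(z) = i(α − z)/(α + z)`. -/
def cayley (α z : ℂ) : ℂ := Complex.I * (α - z) / (α + z)

/-- The inverse `τ_α⁻¹ : ℍ → 𝔻`, `τ_α⁻¹(w) = α(i − w)/(i + w)`. -/
def cayleyInv (α w : ℂ) : ℂ := α * (Complex.I - w) / (Complex.I + w)

/-- The exterior map `φ_e = ρ ∘ φ ∘ ρ`, where `ρ(z) = 1/conj(z)`. -/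
def extMap (φ : ℂ → ℂ) (z : ℂ) : ℂ :=
  ((starRingEnd ℂ) (φ (((starRingEnd ℂ) z)⁻¹)))⁻¹

/-!
If `f₁` is real near `0`, then on the real axis `f₂ ∘ f₁` only samples `f₂` at the real points
`f₁ x → 0`, which are nonzero for `x ≠ 0` since `f₁` maps the upper half-plane into itself and so is
not constant; the contact ratio of `f₂ ∘ f₁` at `x` is that of `f₂` at `f₁ x`.

If `f₂` is real near `0`, write `f₂ z - f₂ 0 = zⁿ u(z)` with `u 0 ≠ 0`; `u 0` is real, and
`Im f₂ > 0` on the rays `t e^{iθ}`, `0 < θ < π`, forces `u 0 · sin (nθ) ≥ 0`, hence `n = 1` and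
`a := u 0 > 0`. Strict differentiability with the real derivative `a` then gives
`Im f₂ w ≍ Im w` and `‖f₂ w - f₂ 0‖ ≍ ‖w‖` near `0`, so the contact ratio of `f₂ ∘ f₁` is
comparable to that of `f₁`.
-/

lemma frequently_mem_UHP : ∃ᶠ z in 𝓝 (0 : ℂ), z ∈ UHP :=
  mem_closure_iff_frequently.mp <| by simp [UHP, closure_setOfPred_lt_im]

lemma not_eventually_eq_of_mapsTo_UHP {W : Set ℂ} (hW : W ∈ 𝓝 0) {g : ℂ → ℂ}
    (hg : ∀ z ∈ W ∩ UHP, g z ∈ UHP) {c : ℂ} (hc : c.im = 0) : ¬∀ᶠ z in 𝓝 0, g z = c := by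
  intro h
  obtain ⟨z, hz, hgz, hzW⟩ := (frequently_mem_UHP.and_eventually (h.and hW)).exists
  have hpos : 0 < (g z).im := hg z ⟨hzW, hz⟩
  rw [hgz, hc] at hpos
  exact hpos.false

lemma tendsto_ofReal_nhdsNE_zero : Tendsto ((↑) : ℝ → ℂ) (𝓝[≠] 0) (𝓝[≠] 0) :=
  tendsto_nhdsWithin_iff.mpr
    ⟨by simpa using continuous_ofReal.continuousAt.tendsto.mono_left (nhdsWithin_le_nhds (a := 0)),
      eventually_mem_nhdsWithin.mono fun _ hx => ofReal_ne_zero.mpr hx⟩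

lemma eventually_im_eq_zero_of_forall_abs_lt {g : ℂ → ℂ}
    (h : ∃ ε > 0, ∀ x : ℝ, |x| < ε → (g x).im = 0) : ∀ᶠ x : ℝ in 𝓝 0, (g x).im = 0 :=
  Metric.eventually_nhds_iff.mpr (by simpa only [Real.dist_0_eq_abs] using h)

lemma im_eq_zero_of_eventually_eq_pow_mul {h u : ℂ → ℂ} (hu : ContinuousAt u 0) {n : ℕ}
    (hfac : ∀ᶠ z in 𝓝 0, h z = z ^ n * u z) (hreal : ∀ᶠ x : ℝ in 𝓝 0, (h x).im = 0) :
    (u 0).im = 0 := by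
  have hofReal : Tendsto ((↑) : ℝ → ℂ) (𝓝[≠] 0) (𝓝 0) :=
    tendsto_ofReal_nhdsNE_zero.mono_right nhdsWithin_le_nhds
  have hlim : Tendsto (fun x : ℝ => u x) (𝓝[≠] 0) (𝓝 (u 0)) := hu.tendsto.comp hofReal
  refine (isClosed_eq continuous_im continuous_const).mem_of_frequently_of_tendsto
    (Eventually.frequently ?_) hlim
  filter_upwards [hofReal.eventually hfac, hreal.filter_mono nhdsWithin_le_nhds,
    self_mem_nhdsWithin] with x hfx hx (hx0 : x ≠ 0)
  rw [hfx, ← ofReal_pow, im_ofReal_mul] at hx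
  exact (mul_eq_zero.mp hx).resolve_left (pow_ne_zero n hx0)

lemma im_exp_pow_mul_nonneg {u : ℂ → ℂ} (hu : ContinuousAt u 0) {n : ℕ}
    (hpos : ∀ᶠ z in 𝓝 0, z ∈ UHP → 0 < (z ^ n * u z).im) {θ : ℝ} (hθ : θ ∈ Ioo 0 Real.pi) :
    0 ≤ (exp (θ * I) ^ n * u 0).im := by
  set e := exp (θ * I)
  have hray : Tendsto (fun t : ℝ => (t : ℂ) * e) (𝓝[>] 0) (𝓝 0) := by
    simpa using ((continuous_ofReal.mul_const e).tendsto 0).mono_left nhdsWithin_le_nhds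
  refine ge_of_tendsto ((continuous_im.continuousAt.comp
    (continuousAt_const.mul hu)).tendsto.comp hray) ?_
  filter_upwards [hray.eventually hpos, self_mem_nhdsWithin] with t ht (htpos : 0 < t)
  have hmem : (t : ℂ) * e ∈ UHP := by
    simpa [UHP, e, im_ofReal_mul, exp_ofReal_mul_I_im] using
      mul_pos htpos (Real.sin_pos_of_pos_of_lt_pi hθ.1 hθ.2)
  have := ht hmem
  rw [mul_pow, ← ofReal_pow, mul_assoc, im_ofReal_mul] at this
  exact (pos_of_mul_pos_right this (pow_pos htpos n).le).le

lemma eq_one_and_pos_of_forall_sin_nonneg {n : ℕ} (hn : n ≠ 0) {b : ℝ} (hb : b ≠ 0)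
    (h : ∀ θ ∈ Ioo 0 Real.pi, 0 ≤ b * Real.sin (n * θ)) : n = 1 ∧ 0 < b := by
  have hn₁ : (1 : ℝ) ≤ n := by exact_mod_cast Nat.one_le_iff_ne_zero.mpr hn
  have hb_pos : 0 < b := by
    have hθ := h (Real.pi / (2 * n)) ⟨by positivity, by
      rw [div_lt_iff₀ (by positivity)]; nlinarith [Real.pi_pos]⟩
    rw [show (n : ℝ) * (Real.pi / (2 * n)) = Real.pi / 2 by field_simp, Real.sin_pi_div_two,
      mul_one] at hθ
    exact hθ.lt_of_ne' hb
  refine ⟨?_, hb_pos⟩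
  by_contra hn_ne
  have hn₂ : (2 : ℝ) ≤ n := by exact_mod_cast (by omega : 2 ≤ n)
  have hθ := h (3 * Real.pi / (2 * n)) ⟨by positivity, by
    rw [div_lt_iff₀ (by positivity)]; nlinarith [Real.pi_pos]⟩
  rw [show (n : ℝ) * (3 * Real.pi / (2 * n)) = Real.pi / 2 + Real.pi by field_simp; ring,
    Real.sin_add_pi, Real.sin_pi_div_two] at hθ
  linarith

lemma exists_deriv_eq_ofReal_pos {W : Set ℂ} (hW : W ∈ 𝓝 0) {g : ℂ → ℂ}
    (hg : AnalyticAt ℂ g 0) (hUHP : ∀ z ∈ W ∩ UHP, g z ∈ UHP)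
    (hreal : ∀ᶠ x : ℝ in 𝓝 0, (g x).im = 0) : ∃ a : ℝ, 0 < a ∧ deriv g 0 = a := by
  have hg0 : (g 0).im = 0 := by simpa using hreal.self_of_nhds
  have hh : AnalyticAt ℂ (fun z => g z - g 0) 0 := hg.sub analyticAt_const
  obtain ⟨n, u, hu, hu0, hfac⟩ := hh.exists_eventuallyEq_pow_smul_nonzero_iff.mpr <| by
    simpa only [sub_eq_zero] using not_eventually_eq_of_mapsTo_UHP hW hUHP hg0
  simp only [sub_zero, smul_eq_mul] at hfac
  have hn : n ≠ 0 := by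
    rintro rfl
    exact hu0 (by simpa [eq_comm] using hfac.self_of_nhds)
  have hu0_real : (u 0).im = 0 := im_eq_zero_of_eventually_eq_pow_mul hu.continuousAt hfac
    (hreal.mono fun x hx => by simp [hx, hg0])
  obtain ⟨b, hb⟩ : ∃ b : ℝ, u 0 = b := ⟨(u 0).re, Complex.ext rfl (by simpa using hu0_real)⟩
  have hpos : ∀ᶠ z in 𝓝 0, z ∈ UHP → 0 < (z ^ n * u z).im := by
    filter_upwards [hfac, hW] with z hz hzW hzU
    simpa [UHP, ← hz, hg0] using hUHP z ⟨hzW, hzU⟩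
  -- On the ray `t e^{iθ}` the leading term `b tⁿ e^{inθ}` dominates `Im g`.
  have hsin : ∀ θ ∈ Ioo 0 Real.pi, 0 ≤ b * Real.sin (n * θ) := fun θ hθ => by
    have := im_exp_pow_mul_nonneg hu.continuousAt hpos hθ
    rwa [hb, ← exp_nat_mul, ← mul_assoc, ← ofReal_natCast, ← ofReal_mul, im_mul_ofReal,
      exp_ofReal_mul_I_im, mul_comm] at this
  obtain ⟨rfl, hb_pos⟩ := eq_one_and_pos_of_forall_sin_nonneg hn
    (by rintro rfl; exact hu0 (by simpa using hb)) hsin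
  refine ⟨b, hb_pos, HasDerivAt.deriv ?_⟩
  have hderiv : HasDerivAt (fun z => g 0 + z * u z) (u 0) 0 := by
    simpa using ((hasDerivAt_id (0 : ℂ)).mul hu.differentiableAt.hasDerivAt).const_add (g 0)
  rw [← hb]
  exact hderiv.congr_of_eventuallyEq (hfac.mono fun z hz => by
    rw [pow_one] at hz
    simp [← hz])

lemma HasStrictDerivAt.eventually_abs_im_sub_le {g : ℂ → ℂ} {a : ℝ}
    (hg : HasStrictDerivAt g a 0) (hreal : ∀ᶠ x : ℝ in 𝓝 0, (g x).im = 0) {κ : ℝ} (hκ : 0 < κ) :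
    ∀ᶠ w in 𝓝 0, |(g w).im - a * w.im| ≤ κ * |w.im| ∧ |‖g w - g 0‖ - |a| * ‖w‖| ≤ κ * ‖w‖ := by
  have hlin := (hasDerivAtFilter_iff_isLittleO.mp hg).def hκ
  have hre : Tendsto (fun w : ℂ => w.re) (𝓝 0) (𝓝 0) := continuous_re.tendsto' 0 0 zero_re
  have hpair : Tendsto (fun w : ℂ => (w, (w.re : ℂ))) (𝓝 0) (𝓝 (0, 0)) :=
    tendsto_id.prodMk_nhds (continuous_ofReal.tendsto' 0 0 ofReal_zero |>.comp hre)
  have hpair₀ : Tendsto (fun w : ℂ => (w, (0 : ℂ))) (𝓝 0) (𝓝 (0, 0)) :=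
    tendsto_id.prodMk_nhds tendsto_const_nhds
  -- `g` is real at `Re w`, so `Im (g w)` is the imaginary part of an increment of length `|Im w|`.
  filter_upwards [hpair.eventually hlin, hpair₀.eventually hlin, hre.eventually hreal]
    with w hw hw₀ hw_re
  have hw_sub : w - w.re = w.im * I := Complex.ext (by simp) (by simp)
  constructor
  · calc |(g w).im - a * w.im| = |(g w - g w.re - (w - w.re) • (a : ℂ)).im| := by
          simp [hw_re, hw_sub, mul_comm]
      _ ≤ ‖g w - g w.re - (w - w.re) • (a : ℂ)‖ := abs_im_le_norm _
      _ ≤ κ * ‖w - w.re‖ := hw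
      _ = κ * |w.im| := by simp [hw_sub]
  · calc |‖g w - g 0‖ - |a| * ‖w‖| = |‖g w - g 0‖ - ‖(w - 0) • (a : ℂ)‖| := by
          simp [mul_comm]
      _ ≤ ‖g w - g 0 - (w - 0) • (a : ℂ)‖ := abs_norm_sub_norm_le _ _
      _ ≤ κ * ‖w - 0‖ := hw₀
      _ = κ * ‖w‖ := by rw [sub_zero]

lemma rpow_mem_Icc_min_max {c C q N : ℝ} (hc : 0 < c) (hq : q ∈ Icc c C) :
    q ^ N ∈ Icc (min (c ^ N) (C ^ N)) (max (c ^ N) (C ^ N)) := by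
  rcases le_or_gt 0 N with hN | hN
  · exact ⟨(min_le_left _ _).trans (Real.rpow_le_rpow hc.le hq.1 hN),
      (Real.rpow_le_rpow (hc.le.trans hq.1) hq.2 hN).trans (le_max_right _ _)⟩
  · exact ⟨(min_le_right _ _).trans (Real.rpow_le_rpow_of_nonpos (hc.trans_le hq.1) hq.2 hN.le),
      (Real.rpow_le_rpow_of_nonpos hc hq.1 hN.le).trans (le_max_left _ _)⟩

lemma div_rpow_mem_Icc_of_mem_Icc {A B A' B' c C N : ℝ} (hc : 0 < c) (hA : 0 < A) (hB : 0 < B)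
    (hA' : A' ∈ Icc (c * A) (C * A)) (hB' : B' ∈ Icc (c * B) (C * B)) :
    A' / B' ^ N ∈
      Icc (c / max (c ^ N) (C ^ N) * (A / B ^ N)) (C / min (c ^ N) (C ^ N) * (A / B ^ N)) := by
  set p := A' / A
  set q := B' / B
  have hp : p ∈ Icc c C := ⟨(le_div_iff₀ hA).mpr hA'.1, (div_le_iff₀ hA).mpr hA'.2⟩
  have hq : q ∈ Icc c C := ⟨(le_div_iff₀ hB).mpr hB'.1, (div_le_iff₀ hB).mpr hB'.2⟩
  have hqN := rpow_mem_Icc_min_max (N := N) hc hq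
  have hmin : 0 < min (c ^ N) (C ^ N) :=
    lt_min (Real.rpow_pos_of_pos hc N) (Real.rpow_pos_of_pos (hc.trans_le (hp.1.trans hp.2)) N)
  have hBN : 0 < B ^ N := Real.rpow_pos_of_pos hB N
  have hratio : A' / B' ^ N = p / q ^ N * (A / B ^ N) := by
    rw [← div_mul_cancel₀ A' hA.ne', ← div_mul_cancel₀ B' hB.ne',
      Real.mul_rpow (hc.le.trans hq.1) hB.le, mul_div_mul_comm]
  have hfactor : 0 ≤ A / B ^ N := (div_pos hA hBN).le
  rw [hratio]
  exact ⟨mul_le_mul_of_nonneg_right (div_le_div₀ (hc.le.trans hp.1) hp.1 (hmin.trans_le hqN.1)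
      hqN.2) hfactor,
    mul_le_mul_of_nonneg_right (div_le_div₀ (hc.le.trans (hp.1.trans hp.2)) hp.2 hmin hqN.1)
      hfactor⟩

lemma halfPlaneContact_iff {f : ℂ → ℂ} {c : ℝ} :
    HalfPlaneContact f c ↔ (f 0).im = 0 ∧ ∃ m M : ℝ, 0 < m ∧
      ∀ᶠ x : ℝ in 𝓝[≠] 0, (f x).im / ‖f 0 - f x‖ ^ c ∈ Icc m M := by
  simp only [HalfPlaneContact, eventually_nhdsWithin_iff, Metric.eventually_nhds_iff,
    Real.dist_0_eq_abs, mem_compl_iff, mem_singleton_iff, abs_pos, mem_Icc]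
  refine and_congr_right fun _ => ⟨?_, ?_⟩
  · rintro ⟨m, M, δ, hm, -, hδ, h⟩
    exact ⟨m, M, hm, δ, hδ, fun x hx hx0 => h x hx0 hx⟩
  · rintro ⟨m, M, hm, δ, hδ, h⟩
    have hmM := h (y := δ / 2) (by rw [abs_of_pos (half_pos hδ)]; linarith) (half_pos hδ).ne'
    exact ⟨m, M, δ, hm, hmM.1.trans hmM.2, hδ, fun x hx0 hx => h hx hx0⟩

lemma ContinuousAt.tendsto_comp_ofReal_nhdsNE {f : ℂ → ℂ} (hfc : ContinuousAt f 0)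
    (hf0 : f 0 = 0) : Tendsto (fun x : ℝ => f x) (𝓝[≠] 0) (𝓝 0) :=
  hf0 ▸ hfc.tendsto.comp (tendsto_ofReal_nhdsNE_zero.mono_right nhdsWithin_le_nhds)

lemma HalfPlaneContact.comp_of_hasStrictDerivAt {f g : ℂ → ℂ} {N : ℝ}
    (hf : HalfPlaneContact f N) (hf0 : f 0 = 0) (hfc : ContinuousAt f 0) {a : ℝ} (ha : 0 < a)
    (hg : HasStrictDerivAt g a 0) (hreal : ∀ᶠ x : ℝ in 𝓝 0, (g x).im = 0) :
    HalfPlaneContact (g ∘ f) N := by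
  rw [halfPlaneContact_iff] at hf ⊢
  obtain ⟨-, m, M, hm, hratio⟩ := hf
  have hg0 : (g 0).im = 0 := by simpa using hreal.self_of_nhds
  -- With `κ = a / 2`, `Im (g w)` and `‖g w - g 0‖` lie between `a / 2` and `3a / 2` times
  -- `Im w` and `‖w‖`.
  refine ⟨by simpa [hf0] using hg0, a / 2 / max ((a / 2) ^ N) ((3 * a / 2) ^ N) * m,
    3 * a / 2 / min ((a / 2) ^ N) ((3 * a / 2) ^ N) * M, by positivity, ?_⟩
  filter_upwards [hratio, (hfc.tendsto_comp_ofReal_nhdsNE hf0).eventually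
    (hg.eventually_abs_im_sub_le hreal (half_pos ha))] with x hx ⟨him, hnorm⟩
  set w := f x
  simp only [hf0, zero_sub, norm_neg] at hx
  have hw_im : 0 < w.im := ((div_pos_iff.mp (hm.trans_le hx.1)).resolve_right
    fun h => (Real.rpow_nonneg (norm_nonneg w) N).not_gt h.2).1
  have hw_norm : 0 < ‖w‖ := norm_pos_iff.mpr fun h => by simp [h] at hw_im
  rw [abs_of_pos hw_im, abs_le] at him
  rw [abs_of_pos ha, abs_le] at hnorm
  have hbounds := div_rpow_mem_Icc_of_mem_Icc (A' := (g w).im) (B' := ‖g w - g 0‖)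
    (C := 3 * a / 2) (N := N) (half_pos ha) hw_im
    hw_norm ⟨by linarith, by linarith⟩ ⟨by linarith, by linarith⟩
  simp only [Function.comp_apply, hf0, norm_sub_rev (g 0)]
  exact ⟨(mul_le_mul_of_nonneg_left hx.1 (by positivity)).trans hbounds.1,
    hbounds.2.trans (mul_le_mul_of_nonneg_left hx.2 (by positivity))⟩

lemma HalfPlaneContact.comp_of_real {f g : ℂ → ℂ} {N : ℝ} (hg : HalfPlaneContact g N)
    (hf0 : f 0 = 0) (hfc : ContinuousAt f 0) (hreal : ∀ᶠ x : ℝ in 𝓝 0, (f x).im = 0)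
    (hne : ∀ᶠ x : ℝ in 𝓝[≠] 0, f x ≠ 0) : HalfPlaneContact (g ∘ f) N := by
  rw [halfPlaneContact_iff] at hg ⊢
  obtain ⟨hg0, m, M, hm, hratio⟩ := hg
  have hf_real : ∀ᶠ x : ℝ in 𝓝[≠] 0, f x = ((f x).re : ℂ) :=
    (hreal.filter_mono nhdsWithin_le_nhds).mono fun x hx => Complex.ext rfl (by simp [hx])
  have hre : Tendsto (fun x : ℝ => (f x).re) (𝓝[≠] 0) (𝓝[≠] 0) := by
    refine tendsto_nhdsWithin_iff.mpr ⟨?_, ?_⟩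
    · exact (continuous_re.tendsto' 0 0 zero_re).comp (hfc.tendsto_comp_ofReal_nhdsNE hf0)
    · filter_upwards [hne, hf_real] with x hx hx_real (h0 : (f x).re = 0)
      exact hx (by rw [hx_real, h0, ofReal_zero])
  refine ⟨by simpa [hf0] using hg0, m, M, hm, ?_⟩
  filter_upwards [hre.eventually hratio, hf_real] with x hx hx_real
  rw [Function.comp_apply, Function.comp_apply, hf0, hx_real]
  exact hx

/-- if one of `f₁`, `f₂` has order of contact `N` with `ℝ` at `0` and the other
maps an open real interval containing `0` into `ℝ`, then `f₂ ∘ f₁` has order of contact `N`. -/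
theorem contact_of_comp_real
    (W : Set ℂ) (hW : W ∈ 𝓝 (0 : ℂ)) (f₁ f₂ : ℂ → ℂ)
    (hf₁a : AnalyticAt ℂ f₁ 0) (hf₂a : AnalyticAt ℂ f₂ 0)
    (hf₁m : ∀ z ∈ W ∩ UHP, f₁ z ∈ UHP) (hf₂m : ∀ z ∈ W ∩ UHP, f₂ z ∈ UHP)
    (hf₁0 : f₁ 0 = 0) (N : ℝ)
    (hc : (HalfPlaneContact f₁ N ∧ ∃ ε > 0, ∀ x : ℝ, |x| < ε → (f₂ (x : ℂ)).im = 0) ∨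
          (HalfPlaneContact f₂ N ∧ ∃ ε > 0, ∀ x : ℝ, |x| < ε → (f₁ (x : ℂ)).im = 0)) :
    HalfPlaneContact (f₂ ∘ f₁) N := by
  rcases hc with ⟨hcontact, hreal⟩ | ⟨hcontact, hreal⟩
  · have hreal' := eventually_im_eq_zero_of_forall_abs_lt hreal
    obtain ⟨a, ha, hderiv⟩ := exists_deriv_eq_ofReal_pos hW hf₂a hf₂m hreal'
    exact hcontact.comp_of_hasStrictDerivAt hf₁0 hf₁a.continuousAt ha
      (hderiv ▸ hf₂a.hasStrictDerivAt) hreal'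
  · have hne : ∀ᶠ z in 𝓝[≠] 0, f₁ z ≠ 0 :=
      hf₁a.eventually_eq_zero_or_eventually_ne_zero.resolve_left
        (not_eventually_eq_of_mapsTo_UHP hW hf₁m zero_im)
    exact hcontact.comp_of_real hf₁0 hf₁a.continuousAt
      (eventually_im_eq_zero_of_forall_abs_lt hreal) (tendsto_ofReal_nhdsNE_zero.eventually hne)
end
end

section
/- Let V be an open set containing the closed unit disk, and let φ : V → ℂ be analytic with φ(𝔻) ⊆ 𝔻. Suppose |φ(ζ₀)| < 1 for at least one ζ₀ ∈ ∂𝔻 (i.e., φ is not a finite Blaschke product). Then the set A = {ζ ∈ ∂𝔻 : |φ(ζ)| = 1} is finite, and for every ζ ∈ A there exists an even positive integer n such that φ has order of contact n with ∂𝔻 at ζ. -/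
/-!
The contact points are the zeros on `∂𝔻` of `F z = 1 - φ z * conj (φ (1 / conj z))`, which is
analytic on an annulus around the circle and equals `1 - ‖φ‖ ^ 2` on it. Since `F ζ₀ ≠ 0`, `F`
does not vanish identically, so its zeros on the compact circle are isolated, hence finitely many.

At a contact point `ζ` write `F z = (z - ζ) ^ n * G z` with `G ζ ≠ 0` and `n ≥ 1`. Along
`θ ↦ ζ * exp (θ * I)` the quotient `F / θ ^ n` tends to `(ζ * I) ^ n * G ζ ≠ 0` while `F ≥ 0`,
so `n` is even. By Schwarz–Pick, `1 - ‖φ (t * ζ)‖ ^ 2` is at least a multiple of `1 - t`, which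
forces `φ' ζ ≠ 0`. Hence `‖φ ζ - φ η‖ ≍ ‖η - ζ‖` and
`1 - ‖φ η‖ ^ 2 = ‖F η‖ ≍ ‖η - ζ‖ ^ n ≍ ‖φ ζ - φ η‖ ^ n`: the order of contact is `n`.
-/

open Complex Filter Set Topology Asymptotics Metric Polynomial

noncomputable section

open scoped ComplexConjugate ComplexOrder

lemma exists_lt_ball_subset_of_closedBall_subset {E : Type*} [NormedAddCommGroup E]
    [NormedSpace ℝ E] [ProperSpace E] {V : Set E} {x : E} {r : ℝ} (hr : 0 ≤ r) (hV : IsOpen V)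
    (h : closedBall x r ⊆ V) : ∃ R, r < R ∧ ball x R ⊆ V := by
  obtain ⟨δ, hδ, hδV⟩ := (isCompact_closedBall x r).exists_thickening_subset_open hV h
  exact ⟨δ + r, by linarith, by rwa [thickening_closedBall hδ hr] at hδV⟩

lemma norm_le_one_of_mapsTo_ball {E F : Type*} [NormedAddCommGroup E] [NormedSpace ℝ E]
    [NormedAddCommGroup F] [NormedSpace ℝ F] {f : E → F} (hf : MapsTo f (ball 0 1) (ball 0 1))
    (hc : ContinuousOn f (closedBall 0 1)) {z : E} (hz : ‖z‖ ≤ 1) : ‖f z‖ ≤ 1 := by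
  rw [← closure_ball _ one_ne_zero] at hc
  have := hf.closure_of_continuousOn hc
  rw [closure_ball _ one_ne_zero, closure_ball _ one_ne_zero] at this
  simpa using this (mem_closedBall_zero_iff.2 hz)

lemma Complex.isPreconnected_ball_sdiff_closedBall {r : ℝ} (hr : 0 ≤ r) (R : ℝ) :
    IsPreconnected (ball (0 : ℂ) R \ closedBall 0 r) := by
  have hpolar : (fun p : ℝ × ℝ ↦ p.1 * exp (p.2 * I)) '' (Ioo r R ×ˢ univ) =
      ball (0 : ℂ) R \ closedBall 0 r := by
    ext z
    simp only [mem_image, mem_prod, mem_Ioo, mem_univ, and_true, Set.mem_sdiff, mem_ball_zero_iff,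
      mem_closedBall_zero_iff, not_le, Prod.exists]
    constructor
    · rintro ⟨ρ, θ, ⟨hrρ, hρR⟩, rfl⟩
      rw [norm_mul, Complex.norm_exp_ofReal_mul_I, mul_one, Complex.norm_real,
        Real.norm_of_nonneg (by linarith)]
      exact ⟨hρR, hrρ⟩
    · rintro ⟨hzR, hrz⟩
      exact ⟨‖z‖, arg z, ⟨hrz, hzR⟩, Complex.norm_mul_exp_arg_mul_I z⟩
  rw [← hpolar]
  exact (isPreconnected_Ioo.prod isPreconnected_univ).image _ (by fun_prop)

theorem IsCompact.finite_zeros_of_analyticAt {𝕜 E : Type*} [NontriviallyNormedField 𝕜]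
    [NormedAddCommGroup E] [NormedSpace 𝕜 E] {f : 𝕜 → E} {K : Set 𝕜} (hK : IsCompact K)
    (hf : ∀ z ∈ K, AnalyticAt 𝕜 f z) (hf₀ : ∀ z ∈ K, ¬ ∀ᶠ w in 𝓝 z, f w = 0) :
    {z ∈ K | f z = 0}.Finite := by
  refine (hK.finite_sdiff_of_mem_codiscreteWithin (s := {z | f z ≠ 0}) ?_).subset
    fun z hz ↦ ⟨hz.1, not_not.2 hz.2⟩
  rw [mem_codiscreteWithin_iff_forall_mem_nhdsNE]
  exact fun z hz ↦ mem_of_superset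
    ((hf z hz).eventually_eq_zero_or_eventually_ne_zero.resolve_left (hf₀ z hz)) subset_union_left

lemma HasDerivAt.isTheta_sub {𝕜 F : Type*} [NontriviallyNormedField 𝕜] [NormedAddCommGroup F]
    [NormedSpace 𝕜 F] {f : 𝕜 → F} {f' : F} {x : 𝕜} (hf : HasDerivAt f f' x) (hf' : f' ≠ 0) :
    (fun w ↦ f w - f x) =Θ[𝓝 x] fun w ↦ w - x :=
  have hΘ := HasDerivAtFilter.isTheta_sub hf hf'
  have hx : Tendsto (fun w ↦ (w, x)) (𝓝 x) (𝓝 x ×ˢ pure x) :=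
    tendsto_id.prodMk (tendsto_pure.2 (Eventually.of_forall fun _ ↦ rfl))
  ⟨hΘ.1.comp_tendsto hx, hΘ.2.comp_tendsto hx⟩

def discInvolution (a z : ℂ) : ℂ := (a - z) / (1 - conj a * z)

lemma one_sub_conj_mul_ne_zero {a z : ℂ} (ha : ‖a‖ < 1) (hz : ‖z‖ ≤ 1) :
    1 - conj a * z ≠ 0 := by
  intro h
  have : ‖conj a * z‖ < 1 := by
    rw [norm_mul, Complex.norm_conj]
    nlinarith [norm_nonneg a, norm_nonneg z]
  simp [← sub_eq_zero.1 h] at this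

lemma one_sub_norm_le_norm_one_sub_conj_mul {a z : ℂ} (hz : ‖z‖ ≤ 1) :
    1 - ‖a‖ ≤ ‖1 - conj a * z‖ := by
  have : ‖conj a * z‖ ≤ ‖a‖ := by
    rw [norm_mul, Complex.norm_conj]
    exact mul_le_of_le_one_right (norm_nonneg a) hz
  have := norm_sub_norm_le (1 : ℂ) (conj a * z)
  rw [norm_one] at this
  linarith

lemma one_sub_sq_norm_discInvolution_mul {a z : ℂ} (h : 1 - conj a * z ≠ 0) :
    (1 - ‖discInvolution a z‖ ^ 2) * ‖1 - conj a * z‖ ^ 2 = (1 - ‖a‖ ^ 2) * (1 - ‖z‖ ^ 2) := by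
  have hpos : ‖1 - conj a * z‖ ^ 2 ≠ 0 := by positivity
  rw [discInvolution, norm_div, div_pow, sub_mul, div_mul_cancel₀ _ hpos]
  simp only [← Complex.normSq_eq_norm_sq, Complex.normSq_apply, Complex.sub_re,
    Complex.sub_im, Complex.mul_re, Complex.mul_im, Complex.conj_re, Complex.conj_im,
    Complex.one_re, Complex.one_im]
  ring

lemma norm_discInvolution_lt_one {a z : ℂ} (ha : ‖a‖ < 1) (hz : ‖z‖ < 1) :
    ‖discInvolution a z‖ < 1 := by
  have hne := one_sub_conj_mul_ne_zero ha hz.le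
  have hrhs : 0 < (1 - ‖a‖ ^ 2) * (1 - ‖z‖ ^ 2) := by
    apply mul_pos <;> nlinarith [norm_nonneg a, norm_nonneg z]
  rw [← one_sub_sq_norm_discInvolution_mul hne, mul_pos_iff_of_pos_right (by positivity)] at hrhs
  exact (sq_lt_one_iff₀ (norm_nonneg _)).1 (by linarith)

/-- Schwarz–Pick: Schwarz's lemma applied to `discInvolution (f 0) ∘ f`. -/
theorem one_sub_sq_norm_ge_of_mapsTo_ball {f : ℂ → ℂ} (hd : DifferentiableOn ℂ f (ball 0 1))
    (hf : MapsTo f (ball 0 1) (ball 0 1)) {w : ℂ} (hw : ‖w‖ < 1) :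
    (1 - ‖f 0‖) / (1 + ‖f 0‖) * (1 - ‖w‖ ^ 2) ≤ 1 - ‖f w‖ ^ 2 := by
  have hball : ∀ {z : ℂ}, ‖z‖ < 1 → ‖f z‖ < 1 := fun hz ↦ mem_ball_zero_iff.1 (hf (by simpa))
  set a := f 0
  have ha : ‖a‖ < 1 := hball (by simp)
  have hfw := hball hw
  have hschwarz : ‖discInvolution a (f w)‖ ≤ ‖w‖ := by
    refine Complex.norm_le_norm_of_mapsTo_ball (f := fun z ↦ discInvolution a (f z)) ?_ ?_ ?_ hw
    · refine ((differentiableOn_const a).sub hd).div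
        ((differentiableOn_const 1).sub ((differentiableOn_const _).mul hd)) ?_
      exact fun z hz ↦ one_sub_conj_mul_ne_zero ha (hball (mem_ball_zero_iff.1 hz)).le
    · exact fun z hz ↦ ball_subset_closedBall <| mem_ball_zero_iff.2 <|
        norm_discInvolution_lt_one ha (hball (mem_ball_zero_iff.1 hz))
    · simp [discInvolution, a]
  have key := one_sub_sq_norm_discInvolution_mul (one_sub_conj_mul_ne_zero ha hfw.le)
  have hden := one_sub_norm_le_norm_one_sub_conj_mul (a := a) hfw.le
  have ha' : 0 < 1 - ‖a‖ := by linarith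
  have h : (1 - ‖a‖) * ((1 - ‖a‖) * (1 - ‖w‖ ^ 2)) ≤
      (1 - ‖a‖) * ((1 + ‖a‖) * (1 - ‖f w‖ ^ 2)) :=
    calc _ = (1 - ‖w‖ ^ 2) * (1 - ‖a‖) ^ 2 := by ring
      _ ≤ (1 - ‖discInvolution a (f w)‖ ^ 2) * ‖1 - conj a * f w‖ ^ 2 := by
        gcongr
        nlinarith [norm_nonneg (discInvolution a (f w))]
      _ = _ := by rw [key]; ring
  rw [div_mul_eq_mul_div, div_le_iff₀ (by positivity)]
  linarith [le_of_mul_le_mul_left h ha']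

theorem HasDerivAt.ne_zero_of_mapsTo_ball {f : ℂ → ℂ} {ζ d : ℂ} (hder : HasDerivAt f d ζ)
    (hd : DifferentiableOn ℂ f (ball 0 1)) (hf : MapsTo f (ball 0 1) (ball 0 1))
    (hζ : ‖ζ‖ = 1) (hfζ : ‖f ζ‖ = 1) : d ≠ 0 := by
  rintro rfl
  set c := (1 - ‖f 0‖) / (1 + ‖f 0‖)
  have hc : 0 < c := by
    have : ‖f 0‖ < 1 := mem_ball_zero_iff.1 (hf (by simp))
    exact div_pos (by linarith) (by positivity)
  have hlo : (fun w ↦ f w - f ζ) =o[𝓝 ζ] (fun w ↦ w - ζ) := by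
    simpa using hasDerivAt_iff_isLittleO.1 hder
  have hradial : Tendsto (fun t : ℝ ↦ (t : ℂ) * ζ) (𝓝[<] 1) (𝓝 ζ) := by
    refine tendsto_nhdsWithin_of_tendsto_nhds ?_
    exact (by fun_prop : Continuous fun t : ℝ ↦ (t : ℂ) * ζ).tendsto' 1 ζ (by simp)
  obtain ⟨t, hbound, ht0, ht1⟩ := ((hradial.eventually (hlo.def (by positivity : 0 < c / 4))).and
    (Ioo_mem_nhdsLT (by norm_num : (0 : ℝ) < 1))).exists
  have hnorm : ‖(t : ℂ) * ζ‖ = t := by simp [hζ, abs_of_pos ht0]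
  have hdist : ‖(t : ℂ) * ζ - ζ‖ = 1 - t := by
    rw [← sub_one_mul, norm_mul, hζ, mul_one, ← Complex.ofReal_one, ← Complex.ofReal_sub,
      Complex.norm_real, Real.norm_of_nonpos (by linarith)]
    ring
  have hlower := one_sub_sq_norm_ge_of_mapsTo_ball hd hf (w := (t : ℂ) * ζ) (by rwa [hnorm])
  have hupper : 1 - ‖f (t * ζ)‖ ^ 2 ≤ 2 * (c / 4 * (1 - t)) := by
    have h1 : ‖f (t * ζ)‖ < 1 :=
      mem_ball_zero_iff.1 (hf (mem_ball_zero_iff.2 (by rw [hnorm]; exact ht1)))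
    have h2 := norm_sub_norm_le (f ζ) (f (t * ζ))
    rw [norm_sub_rev, hfζ] at h2
    rw [hdist] at hbound
    nlinarith [norm_nonneg (f (t * ζ))]
  rw [hnorm] at hlower
  change c * _ ≤ _ at hlower
  nlinarith [mul_pos hc (sub_pos.2 ht1)]

def circleDefect (φ : ℂ → ℂ) (z : ℂ) : ℂ := 1 - φ z * conj (φ (conj z)⁻¹)

lemma circleDefect_eq_of_norm_eq_one (φ : ℂ → ℂ) {η : ℂ} (hη : ‖η‖ = 1) :
    circleDefect φ η = ((1 - ‖φ η‖ ^ 2 : ℝ) : ℂ) := by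
  have hinv : (conj η)⁻¹ = η := inv_eq_of_mul_eq_one_left <| by
    rw [Complex.mul_conj', hη]; simp
  rw [circleDefect, hinv, Complex.mul_conj']
  push_cast
  ring

lemma differentiableAt_circleDefect {φ : ℂ → ℂ} {z : ℂ} (hz : z ≠ 0)
    (h : DifferentiableAt ℂ φ z) (h' : DifferentiableAt ℂ φ (conj z)⁻¹) :
    DifferentiableAt ℂ (circleDefect φ) z := by
  have hrefl : DifferentiableAt ℂ (conj ∘ φ ∘ conj) z⁻¹ :=
    differentiableAt_conj_conj_iff.2 (by rwa [map_inv₀])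
  have hcomp := hrefl.comp z (differentiableAt_inv hz)
  have : circleDefect φ = fun w ↦ 1 - φ w * (conj ∘ φ ∘ conj) w⁻¹ := by
    ext w; simp [circleDefect, map_inv₀]
  rw [this]
  exact (differentiableAt_const 1).sub (h.mul hcomp)

lemma analyticOnNhd_circleDefect {φ : ℂ → ℂ} {R : ℝ} (hφ : DifferentiableOn ℂ φ (ball 0 R)) :
    AnalyticOnNhd ℂ (circleDefect φ) (ball 0 R \ closedBall 0 R⁻¹) := by
  refine DifferentiableOn.analyticOnNhd (fun z hz ↦ ?_) (isOpen_ball.sdiff isClosed_closedBall)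
  simp only [Set.mem_sdiff, mem_ball_zero_iff, mem_closedBall_zero_iff, not_le] at hz
  have hR : 0 < R⁻¹ := inv_pos.2 ((norm_nonneg z).trans_lt hz.1)
  have hz0 : 0 < ‖z‖ := hR.trans hz.2
  have hz' : ‖(conj z)⁻¹‖ < R := by
    rw [norm_inv, Complex.norm_conj]
    exact (inv_lt_comm₀ (inv_pos.1 hR) hz0).1 hz.2
  refine (differentiableAt_circleDefect (norm_pos_iff.1 hz0) ?_ ?_).differentiableWithinAt
  · exact hφ.differentiableAt (isOpen_ball.mem_nhds (mem_ball_zero_iff.2 hz.1))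
  · exact hφ.differentiableAt (isOpen_ball.mem_nhds (mem_ball_zero_iff.2 hz'))

lemma sphere_subset_ball_sdiff_closedBall_inv {R : ℝ} (hR : 1 < R) :
    sphere (0 : ℂ) 1 ⊆ ball 0 R \ closedBall 0 R⁻¹ := fun η hη ↦ by
  rw [mem_sphere_zero_iff_norm] at hη
  simp [hη, hR, inv_lt_one_of_one_lt₀ hR]

lemma not_eventually_circleDefect_eq_zero {φ : ℂ → ℂ} {R : ℝ} (hR : 1 < R)
    (hφ : DifferentiableOn ℂ φ (ball 0 R)) {ζ₀ ζ : ℂ} (hζ₀ : ‖ζ₀‖ = 1) (hφζ₀ : ‖φ ζ₀‖ < 1)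
    (hζ : ‖ζ‖ = 1) : ¬ ∀ᶠ z in 𝓝 ζ, circleDefect φ z = 0 := fun h ↦ by
  have hA := sphere_subset_ball_sdiff_closedBall_inv hR
  have := (analyticOnNhd_circleDefect hφ).eqOn_zero_of_preconnected_of_eventuallyEq_zero
    (Complex.isPreconnected_ball_sdiff_closedBall (by positivity) R)
    (hA (mem_sphere_zero_iff_norm.2 hζ)) h (hA (mem_sphere_zero_iff_norm.2 hζ₀))
  rw [Pi.zero_apply, circleDefect_eq_of_norm_eq_one φ hζ₀, Complex.ofReal_eq_zero,
    sub_eq_zero] at this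
  exact (pow_lt_one₀ (norm_nonneg _) hφζ₀ two_ne_zero).ne this.symm

lemma even_of_tendsto_div_pow {g : ℝ → ℂ} {n : ℕ} {L : ℂ} (hL : L ≠ 0)
    (h : Tendsto (fun θ : ℝ ↦ g θ / (θ : ℂ) ^ n) (𝓝[≠] 0) (𝓝 L))
    (hg : ∀ᶠ θ in 𝓝[≠] 0, 0 ≤ g θ) : Even n := by
  by_contra hn
  rw [Nat.not_even_iff_odd] at hn
  have hL₀ : 0 ≤ L := by
    refine ge_of_tendsto (h.mono_left (nhdsGT_le_nhdsNE 0)) ?_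
    filter_upwards [hg.filter_mono (nhdsGT_le_nhdsNE 0),
      self_mem_nhdsWithin] with θ hgθ (hθ : 0 < θ)
    rw [← Complex.ofReal_pow]
    exact div_nonneg hgθ (Complex.zero_le_real.2 (pow_nonneg hθ.le n))
  have hL₀' : 0 ≤ -L := by
    refine ge_of_tendsto (h.neg.mono_left (nhdsLT_le_nhdsNE 0)) ?_
    filter_upwards [hg.filter_mono (nhdsLT_le_nhdsNE 0),
      self_mem_nhdsWithin] with θ hgθ (hθ : θ < 0)
    rw [← div_neg, ← Complex.ofReal_pow, ← Complex.ofReal_neg]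
    exact div_nonneg hgθ (Complex.zero_le_real.2 (neg_nonneg.2 (hn.pow_neg hθ).le))
  exact hL (le_antisymm (neg_nonneg.1 hL₀') hL₀)

lemma tendsto_comp_div_pow_of_eventuallyEq_pow_smul {F G : ℂ → ℂ} {γ : ℝ → ℂ} {ζ v : ℂ} {n : ℕ}
    (hγ : HasDerivAt γ v 0) (hγ₀ : γ 0 = ζ) (hG : ContinuousAt G ζ)
    (hFG : F =ᶠ[𝓝 ζ] fun z ↦ (z - ζ) ^ n • G z) :
    Tendsto (fun θ : ℝ ↦ F (γ θ) / (θ : ℂ) ^ n) (𝓝[≠] 0) (𝓝 (v ^ n * G ζ)) := by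
  have hγζ : Tendsto γ (𝓝 0) (𝓝 ζ) := hγ₀ ▸ hγ.continuousAt.tendsto
  have hslope : Tendsto (fun θ : ℝ ↦ (γ θ - ζ) / θ) (𝓝[≠] 0) (𝓝 v) := by
    refine (hasDerivAt_iff_tendsto_slope.1 hγ).congr fun θ ↦ ?_
    simp [slope_def_module, hγ₀, Complex.real_smul, div_eq_inv_mul]
  refine ((hslope.pow n).mul ((hG.tendsto.comp hγζ).mono_left nhdsWithin_le_nhds)).congr' ?_
  filter_upwards [(hγζ.eventually hFG).filter_mono nhdsWithin_le_nhds, self_mem_nhdsWithin]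
    with θ hθ (hθ₀ : θ ≠ 0)
  rw [Function.comp_apply, hθ, smul_eq_mul, div_pow, div_mul_eq_mul_div]

lemma hasDerivAt_mul_exp_ofReal_mul_I (ζ : ℂ) :
    HasDerivAt (fun θ : ℝ ↦ ζ * exp (θ * I)) (ζ * I) 0 := by
  have := (((hasDerivAt_id (0 : ℂ)).mul_const I).cexp.const_mul ζ).comp_ofReal
  simpa using this

theorem even_of_eventuallyEq_pow_smul_of_nonneg {F G : ℂ → ℂ} {ζ : ℂ} {n : ℕ} (hζ : ‖ζ‖ = 1)
    (hF : ∀ η, ‖η‖ = 1 → 0 ≤ F η) (hG : ContinuousAt G ζ) (hGζ : G ζ ≠ 0)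
    (hFG : F =ᶠ[𝓝 ζ] fun z ↦ (z - ζ) ^ n • G z) : Even n := by
  have hζ₀ : ζ ≠ 0 := norm_ne_zero_iff.1 (by rw [hζ]; exact one_ne_zero)
  refine even_of_tendsto_div_pow (g := fun θ ↦ F (ζ * exp (θ * I)))
    (mul_ne_zero (pow_ne_zero n (mul_ne_zero hζ₀ I_ne_zero)) hGζ)
    (tendsto_comp_div_pow_of_eventuallyEq_pow_smul (hasDerivAt_mul_exp_ofReal_mul_I ζ)
      (by simp) hG hFG) (Eventually.of_forall fun θ ↦ hF _ ?_)
  rw [norm_mul, Complex.norm_exp_ofReal_mul_I, hζ, mul_one]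

lemma diskContact_of_isTheta {φ : ℂ → ℂ} {ζ : ℂ} {c : ℝ} (hφζ : ‖φ ζ‖ = 1)
    (hle : ∀ η, ‖η‖ = 1 → ‖φ η‖ ≤ 1) (hne : ∀ᶠ η in 𝓝[≠] ζ, φ η ≠ φ ζ)
    (hΘ : (fun η ↦ 1 - ‖φ η‖ ^ 2) =Θ[𝓝[sphere 0 1 \ {ζ}] ζ] fun η ↦ ‖φ ζ - φ η‖ ^ c) :
    DiskContact φ ζ c := by
  obtain ⟨C, hC, hupper⟩ := hΘ.1.exists_pos
  obtain ⟨C', hC', hlower⟩ := hΘ.2.exists_pos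
  have hne' : ∀ᶠ η in 𝓝[sphere 0 1 \ {ζ}] ζ, φ η ≠ φ ζ :=
    hne.filter_mono (nhdsWithin_mono _ fun _ hη ↦ hη.2)
  obtain ⟨δ, hδ, hball⟩ := Metric.mem_nhdsWithin_iff.1 (hupper.bound.and (hlower.bound.and hne'))
  refine ⟨hφζ, C'⁻¹, max C C'⁻¹, δ, inv_pos.2 hC', le_max_right _ _, hδ,
    fun η hη hηζ hηδ ↦ ?_⟩
  obtain ⟨h₁, h₂, h₃⟩ := hball ⟨mem_ball_iff_norm.2 hηδ, mem_sphere_zero_iff_norm.2 hη, hηζ⟩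
  have hD : 0 ≤ 1 - ‖φ η‖ ^ 2 := sub_nonneg.2 (pow_le_one₀ (norm_nonneg _) (hle η hη))
  have hB : 0 < ‖φ ζ - φ η‖ ^ c := Real.rpow_pos_of_pos (norm_pos_iff.2 (sub_ne_zero.2 h₃.symm)) c
  simp only [Real.norm_of_nonneg hD, Real.norm_of_nonneg hB.le] at h₁ h₂
  constructor
  · rw [le_div_iff₀ hB, inv_mul_le_iff₀ hC']
    exact h₂
  · exact (div_le_iff₀ hB).2 h₁ |>.trans (le_max_left _ _)

lemma diskContact_of_eventuallyEq_pow_smul {φ F G : ℂ → ℂ} {ζ d : ℂ} {n : ℕ}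
    (hφζ : ‖φ ζ‖ = 1) (hle : ∀ η, ‖η‖ = 1 → ‖φ η‖ ≤ 1)
    (hF : ∀ η, ‖η‖ = 1 → F η = ((1 - ‖φ η‖ ^ 2 : ℝ) : ℂ)) (hφ : HasDerivAt φ d ζ) (hd : d ≠ 0)
    (hG : ContinuousAt G ζ) (hGζ : G ζ ≠ 0) (hFG : F =ᶠ[𝓝 ζ] fun z ↦ (z - ζ) ^ n • G z) :
    DiskContact φ ζ n := by
  have hGΘ : G =Θ[𝓝 ζ] fun _ ↦ (1 : ℂ) :=
    (isTheta_of_div_tendsto_nhds_ne_zero (by simpa using hG.tendsto) hGζ).symm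
  have hFΘ : F =Θ[𝓝 ζ] fun z ↦ (φ z - φ ζ) ^ n := by
    refine hFG.trans_isTheta ?_
    simpa using ((hφ.isTheta_sub hd).symm.pow n).smul hGΘ
  refine diskContact_of_isTheta hφζ hle (hφ.eventually_ne hd) ?_
  refine IsTheta.of_norm_eventuallyEq_norm ?_ |>.trans (hFΘ.mono nhdsWithin_le_nhds) |>.trans ?_
  · filter_upwards [self_mem_nhdsWithin] with η hη
    rw [hF η (mem_sphere_zero_iff_norm.1 hη.1), Complex.norm_real]
  · refine IsTheta.of_norm_eventuallyEq_norm (Eventually.of_forall fun η ↦ ?_)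
    dsimp only
    rw [norm_pow, norm_sub_rev, Real.rpow_natCast, Real.norm_of_nonneg (by positivity)]

theorem exists_even_diskContact {φ F : ℂ → ℂ} {ζ d : ℂ} (hζ : ‖ζ‖ = 1) (hφζ : ‖φ ζ‖ = 1)
    (hle : ∀ η, ‖η‖ = 1 → ‖φ η‖ ≤ 1) (hF : ∀ η, ‖η‖ = 1 → F η = ((1 - ‖φ η‖ ^ 2 : ℝ) : ℂ))
    (hφ : HasDerivAt φ d ζ) (hd : d ≠ 0) (hFa : AnalyticAt ℂ F ζ)
    (hF₀ : ¬ ∀ᶠ z in 𝓝 ζ, F z = 0) : ∃ n : ℕ, 0 < n ∧ Even n ∧ DiskContact φ ζ n := by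
  obtain ⟨n, G, hG, hGζ, hFG⟩ := hFa.exists_eventuallyEq_pow_smul_nonzero_iff.2 hF₀
  have hn : n ≠ 0 := by
    rintro rfl
    simpa [hF ζ hζ, hφζ, eq_comm, hGζ] using hFG.self_of_nhds
  have hF_nonneg : ∀ η, ‖η‖ = 1 → 0 ≤ F η := fun η hη ↦ by
    rw [hF η hη, Complex.zero_le_real, sub_nonneg]
    exact pow_le_one₀ (norm_nonneg _) (hle η hη)
  exact ⟨n, n.pos_of_ne_zero hn,
    even_of_eventuallyEq_pow_smul_of_nonneg hζ hF_nonneg hG.continuousAt hGζ hFG,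
    diskContact_of_eventuallyEq_pow_smul hφζ hle hF hφ hd hG.continuousAt hGζ hFG⟩

/-- an analytic self-map of `𝔻` extending analytically past `∂𝔻` which is not a
finite Blaschke product has finitely many points of contact with the circle, each of some even
positive order. -/
theorem finite_contact_set_of_analytic_extension
    (V : Set ℂ) (hVo : IsOpen V) (hV : Metric.closedBall (0 : ℂ) 1 ⊆ V)
    (φ : ℂ → ℂ) (hφ : DifferentiableOn ℂ φ V)
    (hmap : ∀ z ∈ Metric.ball (0 : ℂ) 1, φ z ∈ Metric.ball (0 : ℂ) 1)
    (ζ₀ : ℂ) (hζ₀ : ‖ζ₀‖ = 1) (hφζ₀ : ‖φ ζ₀‖ < 1) :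
    Set.Finite {ζ : ℂ | ‖ζ‖ = 1 ∧ ‖φ ζ‖ = 1} ∧
    ∀ ζ : ℂ, ‖ζ‖ = 1 → ‖φ ζ‖ = 1 →
      ∃ n : ℕ, 0 < n ∧ Even n ∧ DiskContact φ ζ (n : ℝ) := by
  obtain ⟨R, hR, hRV⟩ := exists_lt_ball_subset_of_closedBall_subset zero_le_one hVo hV
  have hφR := hφ.mono hRV
  have hF : ∀ ζ ∈ sphere (0 : ℂ) 1, AnalyticAt ℂ (circleDefect φ) ζ := fun ζ hζ ↦
    analyticOnNhd_circleDefect hφR ζ (sphere_subset_ball_sdiff_closedBall_inv hR hζ)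
  have hF₀ : ∀ ζ ∈ sphere (0 : ℂ) 1, ¬ ∀ᶠ z in 𝓝 ζ, circleDefect φ z = 0 := fun ζ hζ ↦
    not_eventually_circleDefect_eq_zero hR hφR hζ₀ hφζ₀ (mem_sphere_zero_iff_norm.1 hζ)
  have hle : ∀ η : ℂ, ‖η‖ = 1 → ‖φ η‖ ≤ 1 := fun η hη ↦
    norm_le_one_of_mapsTo_ball hmap (hφ.continuousOn.mono hV) hη.le
  refine ⟨((isCompact_sphere 0 1).finite_zeros_of_analyticAt hF hF₀).subset ?_, fun ζ hζ hφζ ↦ ?_⟩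
  · rintro η ⟨hη, hφη⟩
    exact ⟨mem_sphere_zero_iff_norm.2 hη, by simp [circleDefect_eq_of_norm_eq_one φ hη, hφη]⟩
  have hζ' := mem_sphere_zero_iff_norm.2 hζ
  have hder := (hφ.differentiableAt (hVo.mem_nhds (hV (sphere_subset_closedBall hζ')))).hasDerivAt
  exact exists_even_diskContact hζ hφζ hle (fun η ↦ circleDefect_eq_of_norm_eq_one φ) hder
    (hder.ne_zero_of_mapsTo_ball (hφ.mono (ball_subset_closedBall.trans hV)) hmap hζ hφζ)
    (hF ζ hζ') (hF₀ ζ hζ')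
end
end

section
/- Let f ∈ 𝒫₀ be a non-constant rational function with f(0) ∈ ℝ and f′(0) > 0, and let g be the reduction of f at 0. Then g is a rational function with deg g = deg f − 1, and for every x ∈ ℝ ∖ {0} that is a pole of neither f nor g, one has Im g(x) > 0 if and only if Im f(x) > 0. -/
open Complex Filter Set Topology Asymptotics Metric Polynomial

noncomputable section

/-! Since `f(0) = p(0)/q(0)`, we can write `p = X s + f(0) q`, so `f = f(0) + z s/q` near `0` and
`s(0) = f'(0) q(0)`; likewise `s = X u + f'(0) q`, and then `g = u / (f'(0) s)`. A common root of `u`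
and `s` would be one of `p` and `q`, and comparing degrees along these two division steps gives
`deg g = deg f - 1`. By the open mapping theorem `f ≠ f(0)` on `ℍ`, so `s` has no zeros there. On the
real line `1/(f'(0) x)` is real and `w ↦ -1/w` preserves the upper half-plane, so `Im g(x)` and
`Im f(x)` have the same sign. -/

theorem isOpen_UHP : IsOpen UHP := isOpen_lt continuous_const continuous_im

theorem ne_zero_of_mem_UHP {z : ℂ} (hz : z ∈ UHP) : z ≠ 0 := by
  rintro rfl
  simp [UHP] at hz

theorem zero_mem_closure_UHP : (0 : ℂ) ∈ closure UHP := by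
  simp [UHP]

theorem InPick.eq_const_or_im_pos {f : ℂ → ℂ} (hf : InPick f) :
    (∃ w, ∀ z ∈ UHP, f z = w) ∨ ∀ z ∈ UHP, 0 < (f z).im := by
  refine ((hf.1.analyticOnNhd isOpen_UHP).is_constant_or_isOpen
    (convex_halfSpace_im_gt 0).isPreconnected).imp_right fun hopen z hz => ?_
  have himage : f '' UHP ⊆ interior {w : ℂ | 0 ≤ w.im} :=
    interior_maximal (image_subset_iff.2 hf.2) (hopen UHP le_rfl isOpen_UHP)
  rw [Complex.interior_setOfPred_le_im] at himage
  exact himage (mem_image_of_mem f hz)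

theorem InPick0.im_pos {f : ℂ → ℂ} (hf : InPick0 f) (hnc : ¬ ∀ z ∈ UHP, f z = f 0) :
    ∀ z ∈ UHP, 0 < (f z).im := by
  refine hf.1.eq_const_or_im_pos.resolve_left fun ⟨w, hw⟩ => hnc ?_
  have hf₀ : f 0 ∈ closure (f '' UHP) :=
    mem_closure_image hf.2.continuousAt zero_mem_closure_UHP
  have himage : f '' UHP ⊆ {w} := by
    rintro _ ⟨z, hz, rfl⟩
    exact hw z hz
  have hw₀ : f 0 = w := by
    simpa using closure_mono himage hf₀
  exact fun z hz => (hw z hz).trans hw₀.symm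

theorem Complex.im_neg_inv_pos_iff (z : ℂ) : 0 < (-z⁻¹).im ↔ 0 < z.im := by
  rcases eq_or_ne z 0 with rfl | hz
  · simp
  · rw [neg_im, inv_im, neg_div, neg_neg, div_pos_iff_of_pos_right (normSq_pos.2 hz)]

namespace Polynomial

theorem eventually_eval_ne_zero_nhdsNE {q : ℂ[X]} (hq : q ≠ 0) (z₀ : ℂ) :
    ∀ᶠ z in 𝓝[≠] z₀, q.eval z ≠ 0 := by
  have := mem_codiscreteWithin_iff_forall_mem_nhdsNE.1
    (q.finite_setOfPred_isRoot hq).compl_mem_codiscrete z₀ trivial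
  rwa [compl_univ, union_empty] at this

theorem eval_ne_zero_of_continuousAt_div {p q : ℂ[X]} (hpq : IsCoprime p q) (hq : q ≠ 0)
    {z₀ : ℂ} (hc : ContinuousAt (fun z => p.eval z / q.eval z) z₀) : q.eval z₀ ≠ 0 := by
  intro hq₀
  have hp₀ : p.eval z₀ ≠ 0 := by
    simpa [hq₀] using (isCoprime_iff_aeval_ne_zero_of_isAlgClosed ℂ ℂ p q).1 hpq z₀
  have hlim : Tendsto (fun z => p.eval z / q.eval z * q.eval z) (𝓝[≠] z₀) (𝓝 0) := by
    simpa [hq₀] using (hc.tendsto.mul q.continuousAt.tendsto).mono_left nhdsWithin_le_nhds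
  refine hp₀ (tendsto_nhds_unique (p.continuousAt.tendsto.mono_left nhdsWithin_le_nhds)
    (hlim.congr' ?_))
  filter_upwards [eventually_eval_ne_zero_nhdsNE hq z₀] with z hz using div_mul_cancel₀ _ hz

theorem natDegree_max_sub_C_mul {R : Type*} [Ring R] (p q : R[X]) (c : R) :
    max (p - C c * q).natDegree q.natDegree = max p.natDegree q.natDegree := by
  have hle : ∀ (p' : R[X]) (c' : R),
      max (p' - C c' * q).natDegree q.natDegree ≤ max p'.natDegree q.natDegree := fun p' c' =>
    max_le ((natDegree_sub_le _ _).trans (max_le_max le_rfl (natDegree_C_mul_le _ _)))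
      (le_max_right _ _)
  refine le_antisymm (hle p c) ?_
  simpa using hle (p - C c * q) (-c)

theorem natDegree_X_mul_eq_or {R : Type*} [Semiring R] [Nontrivial R] (p : R[X]) :
    (X * p).natDegree = p.natDegree + 1 ∨ (X * p).natDegree = 0 ∧ p.natDegree = 0 := by
  rcases eq_or_ne p 0 with rfl | hp
  · simp
  · exact Or.inl (natDegree_X_mul hp)

theorem exists_eq_X_mul_add_C_mul {p q : ℂ[X]} (hq₀ : q.eval 0 ≠ 0) :
    ∃ s, p = X * s + C (p.eval 0 / q.eval 0) * q := by
  obtain ⟨s, hs⟩ : X ∣ p - C (p.eval 0 / q.eval 0) * q := by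
    simp [X_dvd_iff, coeff_zero_eq_eval_zero, hq₀]
  exact ⟨s, sub_eq_iff_eq_add.1 hs⟩

section Reduction

variable {p q s u : ℂ[X]} {c a : ℂ}

theorem deriv_eval_div_eval_zero (hps : p = X * s + C c * q) (hq₀ : q.eval 0 ≠ 0) :
    deriv (fun z => p.eval z / q.eval z) 0 = s.eval 0 / q.eval 0 := by
  have hloc : (fun z => p.eval z / q.eval z) =ᶠ[𝓝 0] fun z => c + z * (s.eval z / q.eval z) := by
    filter_upwards [q.continuousAt.eventually_ne hq₀] with z hz
    rw [hps, eval_add, eval_mul, eval_X, eval_mul, eval_C]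
    field_simp
    ring
  have hd : HasDerivAt (fun z => c + z * (s.eval z / q.eval z)) (s.eval 0 / q.eval 0) 0 := by
    simpa using ((hasDerivAt_id 0).mul
      (s.differentiableAt.div q.differentiableAt hq₀).hasDerivAt).const_add c
  rw [hloc.deriv_eq, hd.deriv]

theorem eval_div_sub_eq (hps : p = X * s + C c * q) {z : ℂ} (hq : q.eval z ≠ 0) :
    p.eval z / q.eval z - c = z * s.eval z / q.eval z := by
  rw [hps, eval_add, eval_mul, eval_X, eval_mul, eval_C]
  field_simp
  ring

theorem isCoprime_reduction (hps : p = X * s + C c * q) (hsu : s = X * u + C a * q)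
    (hpq : IsCoprime p q) (ha : a ≠ 0) : IsCoprime u (C a * s) := by
  rw [isCoprime_iff_aeval_ne_zero_of_isAlgClosed ℂ ℂ] at hpq ⊢
  simp only [coe_aeval_eq_eval] at hpq ⊢
  intro z
  by_contra! h
  have hs : s.eval z = 0 := by simpa [ha] using h.2
  have hq : q.eval z = 0 := by simpa [h.1, hs, ha, eq_comm] using congrArg (eval z) hsu
  have hp : p.eval z = 0 := by simp [hps, hs, hq]
  exact (hpq z).elim (· hp) (· hq)

theorem natDegree_reduction (hps : p = X * s + C c * q) (hsu : s = X * u + C a * q)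
    (ha : a ≠ 0) :
    max u.natDegree (C a * s).natDegree = max p.natDegree q.natDegree - 1 := by
  have hp := natDegree_max_sub_C_mul p q c
  rw [hps, add_sub_cancel_right, ← hps] at hp
  have hs := natDegree_max_sub_C_mul (C a * q) s 1
  rw [C_1, one_mul, ← neg_sub, ← eq_sub_of_add_eq hsu.symm, natDegree_neg,
    natDegree_C_mul ha] at hs
  rw [natDegree_C_mul ha]
  rcases natDegree_X_mul_eq_or s with hXs | hXs <;> rcases natDegree_X_mul_eq_or u with hXu | hXu <;>
    omega

theorem eval_div_reduction (hps : p = X * s + C c * q) (hsu : s = X * u + C a * q) {z : ℂ}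
    (ha : a ≠ 0) (hz : z ≠ 0) (hq : q.eval z ≠ 0) (hs : s.eval z ≠ 0) :
    u.eval z / (C a * s).eval z = -(p.eval z / q.eval z - c)⁻¹ + (a * z)⁻¹ := by
  have hu : s.eval z = z * u.eval z + a * q.eval z := by simpa using congrArg (eval z) hsu
  rw [eval_div_sub_eq hps hq, eval_mul, eval_C]
  field_simp
  linear_combination -hu

end Reduction

end Polynomial

theorem reduction_of_rational_general
    (f g : ℂ → ℂ) (p q : Polynomial ℂ) (hco : IsCoprime p q) (hq : q ≠ 0)
    (hrat : ∀ z : ℂ, f z = p.eval z / q.eval z)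
    (hf : InPick0 f) (hnc : ¬ ∀ z ∈ UHP, f z = f 0)
    (hre : (f 0).im = 0) (hdim : (deriv f 0).im = 0) (hdre : 0 < (deriv f 0).re)
    (hgred : ∀ z ∈ UHP, g z = -(f z - f 0)⁻¹ + (deriv f 0 * z)⁻¹) :
    ∃ p' q' : Polynomial ℂ, IsCoprime p' q' ∧ q' ≠ 0 ∧
      max p'.natDegree q'.natDegree = max p.natDegree q.natDegree - 1 ∧
      (∀ z ∈ UHP, g z = p'.eval z / q'.eval z) ∧
      ∀ x : ℝ, x ≠ 0 → q.eval (x : ℂ) ≠ 0 → q'.eval (x : ℂ) ≠ 0 →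
        (0 < (p'.eval (x : ℂ) / q'.eval (x : ℂ)).im ↔
          0 < (p.eval (x : ℂ) / q.eval (x : ℂ)).im) := by
  have hF : f = fun z => p.eval z / q.eval z := funext hrat
  set a := deriv f 0
  have ha : a ≠ 0 := fun h => by simp [h] at hdre
  have hq₀ : q.eval 0 ≠ 0 := eval_ne_zero_of_continuousAt_div hco hq (hF ▸ hf.2.continuousAt)
  obtain ⟨s, hps⟩ := exists_eq_X_mul_add_C_mul (p := p) hq₀
  rw [← hrat] at hps
  have ha_eq : a = s.eval 0 / q.eval 0 := by rw [← deriv_eval_div_eval_zero hps hq₀, ← hF]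
  have hs : s ≠ 0 := by
    rintro rfl
    exact ha (by simp [ha_eq])
  obtain ⟨u, hsu⟩ := exists_eq_X_mul_add_C_mul (p := s) hq₀
  rw [← ha_eq] at hsu
  refine ⟨u, C a * s, isCoprime_reduction hps hsu hco ha, mul_ne_zero (C_ne_zero.2 ha) hs,
    natDegree_reduction hps hsu ha, fun z hz => ?_, fun x hx hqx hq'x => ?_⟩
  · have hqz : q.eval z ≠ 0 := eval_ne_zero_of_continuousAt_div hco hq
      (hF ▸ (hf.1.1.differentiableAt (isOpen_UHP.mem_nhds hz)).continuousAt)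
    have hfz : f z - f 0 ≠ 0 :=
      sub_ne_zero.2 (ne_of_apply_ne im (by rw [hre]; exact (hf.im_pos hnc z hz).ne'))
    rw [hrat, eval_div_sub_eq hps hqz] at hfz
    have hsz : s.eval z ≠ 0 := right_ne_zero_of_mul (div_ne_zero_iff.1 hfz).1
    rw [hgred z hz, eval_div_reduction hps hsu ha (ne_zero_of_mem_UHP hz) hqz hsz, hrat]
  · have hsx : s.eval (x : ℂ) ≠ 0 := right_ne_zero_of_mul (by simpa using hq'x)
    have hreal : ((a * x)⁻¹).im = 0 := by simp [inv_im, mul_im, hdim]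
    rw [eval_div_reduction hps hsu ha (ofReal_ne_zero.2 hx) hqx hsx, add_im, hreal, add_zero,
      Complex.im_neg_inv_pos_iff, sub_im, hre, sub_zero]

/-- the reduction of a non-constant rational function in `𝒫₀` is rational of degree
one less, and off the poles it has positive imaginary part at a nonzero real point exactly when
the original function does. -/
theorem reduction_of_rational
    (f g : ℂ → ℂ) (p q : Polynomial ℂ) (hco : IsCoprime p q) (hq : q ≠ 0)
    (hrat : ∀ z : ℂ, f z = p.eval z / q.eval z)
    (hf : InPick0 f) (hnc : ¬ ∀ z ∈ UHP, f z = f 0)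
    (hre : (f 0).im = 0) (hdim : (deriv f 0).im = 0) (hdre : 0 < (deriv f 0).re)
    (hg : InPick0 g)
    (hgred : ∀ z ∈ UHP, g z = -(f z - f 0)⁻¹ + (deriv f 0 * z)⁻¹) :
    ∃ p' q' : Polynomial ℂ, IsCoprime p' q' ∧ q' ≠ 0 ∧
      max p'.natDegree q'.natDegree = max p.natDegree q.natDegree - 1 ∧
      (∀ z ∈ UHP, g z = p'.eval z / q'.eval z) ∧
      ∀ x : ℝ, x ≠ 0 → q.eval (x : ℂ) ≠ 0 → q'.eval (x : ℂ) ≠ 0 →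
        (0 < (p'.eval (x : ℂ) / q'.eval (x : ℂ)).im ↔
          0 < (p.eval (x : ℂ) / q.eval (x : ℂ)).im) :=
  reduction_of_rational_general f g p q hco hq hrat hf hnc hre hdim hdre hgred
end
end

section
/- Let W be a neighborhood of 0 in ℂ and let f be a non-constant function that is analytic at 0, maps W ∩ ℍ into ℍ, and satisfies f(0) ∈ ℝ. Write f(z) = Σₖ aₖ zᵏ for the Taylor series of f at 0, suppose some aₖ is non-real, and let n = min{k : aₖ ∉ ℝ}. Then a₁ > 0, n is even, Im aₙ > 0, and f has order of contact n with ℝ at 0. -/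
open Complex Filter Set Topology Asymptotics Metric Polynomial

noncomputable section

/-!
Write `f z = ∑_{k<m} a_k z^k + z^m F_m z` with `F_m` continuous and `F_m 0 = a_m`. Let `S` be a cone
on which `Im f ≥ 0` near `0` and the Taylor polynomial of degree `< m` is real; dilating `z ∈ S`
by `t → 0⁺` gives `Im (a_m z^m) ≥ 0` on `S`.

On the real axis (where `Im f ≥ 0` by continuity from `ℍ`) with `m = n`, this says
`Im a_n · x^n ≥ 0`, so `Im a_n > 0` and `n` is even. On `ℍ`, with `m` the first positive index
with `a_m ≠ 0`, it forces `m = 1`, since for `m ≥ 2` the powers `z^m`, `z ∈ ℍ`, cover all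
directions. Finally, for real `x`, `Im f x = x^n Im F_n x` and `‖f 0 - f x‖ = |x| ‖F_1 x‖`, so the
contact ratio tends to `Im a_n / ‖a_1‖^n > 0`.
-/

open scoped Real

theorem taylorCoeff_zero (f : ℂ → ℂ) : taylorCoeff f 0 = f 0 := by
  simp [taylorCoeff]

theorem taylorCoeff_one (f : ℂ → ℂ) : taylorCoeff f 1 = deriv f 0 := by
  simp [taylorCoeff]

theorem AnalyticAt.exists_eq_taylor_add_pow_mul {f : ℂ → ℂ} (hf : AnalyticAt ℂ f 0) (n : ℕ) :
    ∃ F : ℂ → ℂ, ContinuousAt F 0 ∧ F 0 = taylorCoeff f n ∧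
      ∀ z, f z = ∑ k ∈ Finset.range n, taylorCoeff f k * z ^ k + z ^ n * F z := by
  obtain ⟨G, hG, hfG⟩ := hf.exists_eq_sum_add_pow_mul (n + 1)
  refine ⟨fun z => taylorCoeff f n + z * G z, by fun_prop, by simp, fun z => ?_⟩
  have hterm (k : ℕ) : (z ^ k / k.factorial) • iteratedDeriv k f 0 = taylorCoeff f k * z ^ k := by
    rw [taylorCoeff, smul_eq_mul]
    ring
  simp only [hfG, Finset.sum_range_succ, hterm, smul_eq_mul]
  ring

theorem im_sum_mul_ofReal_pow {a : ℕ → ℂ} {n : ℕ} (ha : ∀ k < n, (a k).im = 0) (x : ℝ) :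
    (∑ k ∈ Finset.range n, a k * (x : ℂ) ^ k).im = 0 := by
  rw [im_sum]
  refine Finset.sum_eq_zero fun k hk => ?_
  rw [← ofReal_pow, im_mul_ofReal, ha k (Finset.mem_range.mp hk), zero_mul]

theorem im_nonneg_of_continuousAt {f : ℂ → ℂ} {z : ℂ} (hz : 0 ≤ z.im) (hf : ContinuousAt f z)
    (h : ∀ᶠ w in 𝓝[UHP] z, 0 ≤ (f w).im) : 0 ≤ (f z).im := by
  have : (𝓝[UHP] z).NeBot := mem_closure_iff_nhdsWithin_neBot.mp <| by
    simpa [UHP, closure_setOfPred_lt_im] using hz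
  exact ge_of_tendsto ((continuous_im.tendsto _).comp (hf.tendsto.mono_left nhdsWithin_le_nhds)) h

theorem eventually_im_nonneg_on_real {f : ℂ → ℂ} {W : Set ℂ} (hW : W ∈ 𝓝 0)
    (hf : ∀ᶠ z in 𝓝 0, ContinuousAt f z) (hmap : ∀ z ∈ W ∩ UHP, f z ∈ UHP) :
    ∀ᶠ z in 𝓝 (0 : ℂ), z ∈ range ((↑) : ℝ → ℂ) → 0 ≤ (f z).im := by
  filter_upwards [hf, eventually_mem_nhds_iff.mpr hW] with z hfz hWz
  rintro ⟨x, rfl⟩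
  refine im_nonneg_of_continuousAt (by simp) hfz ?_
  filter_upwards [nhdsWithin_le_nhds hWz, self_mem_nhdsWithin] with w hw hwU
  exact (hmap w ⟨hw, hwU⟩).le

theorem im_taylorCoeff_mul_pow_nonneg {f : ℂ → ℂ} (hf : AnalyticAt ℂ f 0) {S : Set ℂ}
    (hS : ∀ z ∈ S, ∀ t : ℝ, 0 < t → (t : ℂ) * z ∈ S)
    (hpos : ∀ᶠ z in 𝓝 0, z ∈ S → 0 ≤ (f z).im) {m : ℕ}
    (hlow : ∀ z ∈ S, (∑ k ∈ Finset.range m, taylorCoeff f k * z ^ k).im = 0)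
    {z : ℂ} (hz : z ∈ S) : 0 ≤ (taylorCoeff f m * z ^ m).im := by
  obtain ⟨F, hFc, hF0, hfF⟩ := hf.exists_eq_taylor_add_pow_mul m
  have hray : Tendsto (fun t : ℝ => (t : ℂ) * z) (𝓝[>] 0) (𝓝 0) :=
    (Continuous.tendsto' (by fun_prop) 0 0 (by simp)).mono_left nhdsWithin_le_nhds
  have hlim : Tendsto (fun t : ℝ => z ^ m * F (t * z)) (𝓝[>] 0)
      (𝓝 (taylorCoeff f m * z ^ m)) := by
    rw [mul_comm, ← hF0]
    exact (hFc.tendsto.comp hray).const_mul _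
  refine ge_of_tendsto ((continuous_im.tendsto _).comp hlim) ?_
  filter_upwards [hray.eventually hpos, self_mem_nhdsWithin] with t ht (htpos : 0 < t)
  have hfz := ht (hS z hz t htpos)
  rw [hfF, add_im, hlow _ (hS z hz t htpos), zero_add, mul_pow, ← ofReal_pow,
    mul_assoc, im_ofReal_mul] at hfz
  exact nonneg_of_mul_nonneg_right (by simpa [mul_comm] using hfz) (pow_pos htpos m)

theorem eq_zero_of_forall_im_mul_pow_nonneg {c : ℂ} {m : ℕ} (hm : 2 ≤ m)
    (h : ∀ z ∈ UHP, 0 ≤ (c * z ^ m).im) : c = 0 := by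
  have hmpos : (0 : ℝ) < m := by positivity
  have hangle (φ : ℝ) (h0 : 0 < φ) (h2π : φ < 2 * π) :
      0 ≤ c.re * Real.sin φ + c.im * Real.cos φ := by
    have hlt : φ / m < π := by
      rw [div_lt_iff₀ hmpos]
      have : (2 : ℝ) ≤ m := by exact_mod_cast hm
      nlinarith [Real.pi_pos]
    have hz : exp ((φ / m : ℝ) * I) ∈ UHP := by
      rw [UHP, mem_ofPred_eq, exp_ofReal_mul_I_im]
      exact Real.sin_pos_of_pos_of_lt_pi (by positivity) hlt
    have hpow : exp ((φ / m : ℝ) * I) ^ m = exp ((φ : ℝ) * I) := by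
      rw [← exp_nat_mul]
      congr 1
      have hm0 : (m : ℂ) ≠ 0 := by exact_mod_cast hmpos.ne'
      push_cast
      field_simp
    have := h _ hz
    rwa [hpow, mul_im, exp_ofReal_mul_I_re, exp_ofReal_mul_I_im] at this
  have hπ := Real.pi_pos
  have e1 := hangle (π / 2) (by linarith) (by linarith)
  have e2 := hangle (π / 2 + π) (by linarith) (by linarith)
  have e3 := hangle π hπ (by linarith)
  have e4 := hangle (π / 3) (by linarith) (by linarith)
  rw [Real.sin_pi_div_two, Real.cos_pi_div_two] at e1
  rw [Real.sin_add_pi, Real.cos_add_pi, Real.sin_pi_div_two, Real.cos_pi_div_two] at e2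
  rw [Real.sin_pi, Real.cos_pi] at e3
  rw [Real.cos_pi_div_three] at e4
  have hre : c.re = 0 := by linarith
  rw [hre] at e4
  exact Complex.ext hre (by rw [zero_im]; linarith)

theorem ofReal_mul_mem_UHP {z : ℂ} (hz : z ∈ UHP) {t : ℝ} (ht : 0 < t) : (t : ℂ) * z ∈ UHP := by
  simp only [UHP, mem_ofPred_eq, im_ofReal_mul] at hz ⊢
  positivity

theorem im_taylorCoeff_mul_pow_nonneg_of_UHP {f : ℂ → ℂ} (hf : AnalyticAt ℂ f 0)
    (hpos : ∀ᶠ z in 𝓝 0, z ∈ UHP → 0 ≤ (f z).im) (h0 : (f 0).im = 0) {m : ℕ} (hm : 0 < m)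
    (hlow : ∀ k, 0 < k → k < m → taylorCoeff f k = 0) {z : ℂ} (hz : z ∈ UHP) :
    0 ≤ (taylorCoeff f m * z ^ m).im := by
  refine im_taylorCoeff_mul_pow_nonneg hf (fun z hz t ht => ofReal_mul_mem_UHP hz ht) hpos
    (fun w _ => ?_) hz
  rw [Finset.sum_eq_single_of_mem 0 (Finset.mem_range.mpr hm)
    fun k hk hk0 => by rw [hlow k (Nat.pos_of_ne_zero hk0) (Finset.mem_range.mp hk), zero_mul]]
  simpa [taylorCoeff_zero] using h0

theorem taylorCoeff_one_ne_zero {f : ℂ → ℂ} (hf : AnalyticAt ℂ f 0)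
    (hpos : ∀ᶠ z in 𝓝 0, z ∈ UHP → 0 ≤ (f z).im) (h0 : (f 0).im = 0)
    (hex : ∃ k, 0 < k ∧ taylorCoeff f k ≠ 0) : taylorCoeff f 1 ≠ 0 := by
  classical
  obtain ⟨hm, hne⟩ := Nat.find_spec hex
  have hlow (k : ℕ) (hk : 0 < k) (hkm : k < Nat.find hex) : taylorCoeff f k = 0 :=
    not_not.mp fun h => Nat.find_min hex hkm ⟨hk, h⟩
  obtain hm1 | hm2 := (Nat.one_le_iff_ne_zero.mpr hm.ne').eq_or_lt
  · rwa [hm1]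
  · exact absurd (eq_zero_of_forall_im_mul_pow_nonneg hm2
      fun z hz => im_taylorCoeff_mul_pow_nonneg_of_UHP hf hpos h0 hm hlow hz) hne

theorem halfPlaneContact_of_tendsto {f : ℂ → ℂ} {c L : ℝ} (h0 : (f 0).im = 0) (hL : 0 < L)
    (h : Tendsto (fun x : ℝ => (f x).im / ‖f 0 - f x‖ ^ c) (𝓝[≠] 0) (𝓝 L)) :
    HalfPlaneContact f c := by
  obtain ⟨δ, hδ, hball⟩ := Metric.mem_nhdsWithin_iff.mp
    (h (Ioo_mem_nhds (by linarith : L / 2 < L) (by linarith : L < 2 * L)))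
  refine ⟨h0, L / 2, 2 * L, δ, by linarith, by linarith, hδ, fun x hx0 hxδ => ?_⟩
  have hx := hball ⟨by simpa using hxδ, abs_pos.mp hx0⟩
  exact ⟨hx.1.le, hx.2.le⟩

theorem halfPlaneContact_of_even {f : ℂ → ℂ} (hf : AnalyticAt ℂ f 0) (h0 : (f 0).im = 0)
    {n : ℕ} (hn : Even n) (hlow : ∀ k < n, (taylorCoeff f k).im = 0)
    (hpos : 0 < (taylorCoeff f n).im) (h1 : taylorCoeff f 1 ≠ 0) : HalfPlaneContact f n := by
  obtain ⟨F, hFc, hF0, hfF⟩ := hf.exists_eq_taylor_add_pow_mul n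
  obtain ⟨G, hGc, hG0, hfG⟩ := hf.exists_eq_taylor_add_pow_mul 1
  have him (x : ℝ) : (f x).im = x ^ n * (F x).im := by
    rw [hfF, add_im, im_sum_mul_ofReal_pow hlow, zero_add, ← ofReal_pow, im_ofReal_mul]
  have hsub (x : ℝ) : ‖f 0 - f x‖ = |x| * ‖G x‖ := by
    rw [norm_sub_rev, hfG x]
    simp [taylorCoeff_zero]
  have hlim : Tendsto (fun x : ℝ => (F x).im / ‖G x‖ ^ n) (𝓝 0)
      (𝓝 ((taylorCoeff f n).im / ‖taylorCoeff f 1‖ ^ n)) := by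
    rw [← hF0, ← hG0, ← ofReal_zero]
    have hofReal := continuous_ofReal.continuousAt (x := 0)
    refine ((continuous_im.continuousAt.comp (hFc.comp_of_eq hofReal ofReal_zero)).div
      ((hGc.comp_of_eq hofReal ofReal_zero).norm.pow n) ?_).tendsto
    simpa [hG0] using pow_ne_zero n h1
  refine halfPlaneContact_of_tendsto h0 (div_pos hpos (pow_pos (norm_pos_iff.mpr h1) n)) ?_
  refine (hlim.mono_left nhdsWithin_le_nhds).congr' ?_
  filter_upwards [self_mem_nhdsWithin] with x (hx : x ≠ 0)
  rw [Real.rpow_natCast, him, hsub, mul_pow, ← hn.pow_abs x,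
    mul_div_mul_left _ _ (pow_ne_zero n (abs_pos.mpr hx).ne')]

theorem contact_from_first_nonreal_coeff_general
    (W : Set ℂ) (hW : W ∈ 𝓝 (0 : ℂ)) (f : ℂ → ℂ)
    (hfa : AnalyticAt ℂ f 0) (hmap : ∀ z ∈ W ∩ UHP, f z ∈ UHP)
    (hre : (f 0).im = 0)
    (n : ℕ) (hn : (taylorCoeff f n).im ≠ 0) (hmin : ∀ k < n, (taylorCoeff f k).im = 0) :
    ((deriv f 0).im = 0 ∧ 0 < (deriv f 0).re) ∧
    Even n ∧ 0 < (taylorCoeff f n).im ∧ HalfPlaneContact f (n : ℝ) := by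
  have hUHP : ∀ᶠ z in 𝓝 0, z ∈ UHP → 0 ≤ (f z).im := by
    filter_upwards [hW] with z hzW hz using (hmap z ⟨hzW, hz⟩).le
  have hreal := eventually_im_nonneg_on_real hW
    (hfa.eventually_analyticAt.mono fun _ h => h.continuousAt) hmap
  have hcoeff (x : ℝ) : 0 ≤ (taylorCoeff f n).im * x ^ n := by
    have := im_taylorCoeff_mul_pow_nonneg hfa (S := range ((↑) : ℝ → ℂ))
      (by rintro _ ⟨y, rfl⟩ t -; exact ⟨t * y, by push_cast; rfl⟩) hreal
      (by rintro _ ⟨y, rfl⟩; exact im_sum_mul_ofReal_pow hmin y) ⟨x, rfl⟩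
    rwa [← ofReal_pow, im_mul_ofReal] at this
  have hpos : 0 < (taylorCoeff f n).im := lt_of_le_of_ne (by simpa using hcoeff 1) hn.symm
  have heven : Even n := by
    by_contra hodd
    have := hcoeff (-1)
    rw [(Nat.not_even_iff_odd.mp hodd).neg_one_pow] at this
    linarith
  have hn0 : n ≠ 0 := by
    rintro rfl
    exact hn (by rwa [taylorCoeff_zero])
  have h1 := taylorCoeff_one_ne_zero hfa hUHP hre ⟨n, by omega, fun h => hn (by simp [h])⟩
  have h1re : 0 ≤ (taylorCoeff f 1).re := by
    simpa using im_taylorCoeff_mul_pow_nonneg_of_UHP hfa hUHP hre one_pos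
      (fun k hk hk1 => by omega) (z := I) (by simp [UHP])
  have h1im : (taylorCoeff f 1).im = 0 := hmin 1 (by obtain ⟨k, rfl⟩ := heven; omega)
  rw [← taylorCoeff_one]
  exact ⟨⟨h1im, h1re.lt_of_ne' fun h => h1 (Complex.ext h h1im)⟩, heven, hpos,
    halfPlaneContact_of_even hfa hre heven hmin hpos h1⟩

/-- if `f` is analytic at `0`, maps `W ∩ ℍ` into `ℍ`, has `f(0) ∈ ℝ`, and `n` is
the index of its first non-real Taylor coefficient, then `a₁ > 0`, `n` is even, `Im aₙ > 0`,
and `f` has order of contact `n` with `ℝ` at `0`. -/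
theorem contact_from_first_nonreal_coeff
    (W : Set ℂ) (hW : W ∈ 𝓝 (0 : ℂ)) (f : ℂ → ℂ)
    (hfa : AnalyticAt ℂ f 0) (hmap : ∀ z ∈ W ∩ UHP, f z ∈ UHP)
    (hre : (f 0).im = 0)
    (hnc : ¬ ∀ z ∈ W ∩ UHP, f z = f 0)
    (n : ℕ) (hn : (taylorCoeff f n).im ≠ 0) (hmin : ∀ k < n, (taylorCoeff f k).im = 0) :
    ((deriv f 0).im = 0 ∧ 0 < (deriv f 0).re) ∧
    Even n ∧ 0 < (taylorCoeff f n).im ∧ HalfPlaneContact f (n : ℝ) :=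
  contact_from_first_nonreal_coeff_general W hW f hfa hmap hre n hn hmin
end
end
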